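/- Let k = p^a q^b l with gcd(l, pq) = 1, 0 ≤ a ≤ m−1, 0 ≤ b ≤ n−1, and set ζ_p = β^{p^{m−1} q^{n+b}} (a primitive p-th root of unity). Then for all 1 ≤ i ≤ m: S_1^{(i,0)}(β^k) = p^{i−1}(p−1)/2 (as an element of F_{4^{d*}}) if i ≤ a; S_1^{(i,0)}(β^k) = Σ_{t ∈ D_1^{(p)}} ζ_p^{lt} if i = a+1; and S_1^{(i,0)}(β^k) = 0 if i > a+1. -/

import Mathlib

open Finset Polynomial

noncomputable section

/-- The field `F₄` with four elements. -/
abbrev F4 : Type := GaloisField 2 2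

/-- Generic generalized cyclotomic class of index `0` modulo `M`:
`{ g^(2t) * y^k mod M : 0 ≤ t < dHalf, 0 ≤ k < e }`. -/
def GC0 (g y M dHalf e : ℕ) : Finset ℕ :=
  ((Finset.range dHalf) ×ˢ (Finset.range e)).image
    (fun tk => g ^ (2 * tk.1) * y ^ tk.2 % M)

/-- Generic generalized cyclotomic class of index `1` modulo `M`: `g · GC0 (mod M)`. -/
def GC1 (g y M dHalf e : ℕ) : Finset ℕ :=
  (GC0 g y M dHalf e).image (fun x => g * x % M)

/-- Class of index `h ∈ {0,1}`. -/
def GC (h g y M dHalf e : ℕ) : Finset ℕ :=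
  if h = 0 then GC0 g y M dHalf e else GC1 g y M dHalf e

/-- `e_{i,j} = gcd(p^{i-1}(p-1), q^{j-1}(q-1))`. -/
def eij (p q i j : ℕ) : ℕ := Nat.gcd (p ^ (i - 1) * (p - 1)) (q ^ (j - 1) * (q - 1))

/-- `d_{i,j} = p^{i-1}(p-1) q^{j-1}(q-1) / e_{i,j}`. -/
def dij (p q i j : ℕ) : ℕ := p ^ (i - 1) * (p - 1) * (q ^ (j - 1) * (q - 1)) / eij p q i j

/-- `D_h^{(p^i q^j)}`. -/
def DPQ (p q g y h i j : ℕ) : Finset ℕ :=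
  GC h g y (p ^ i * q ^ j) (dij p q i j / 2) (eij p q i j)

/-- `D_h^{(2 p^i q^j)}`. -/
def D2PQ (p q g y h i j : ℕ) : Finset ℕ :=
  GC h g y (2 * (p ^ i * q ^ j)) (dij p q i j / 2) (eij p q i j)

/-- `D_h^{(p^i)}`. -/
def DP (p g h i : ℕ) : Finset ℕ := GC h g 1 (p ^ i) (p ^ (i - 1) * (p - 1) / 2) 1

/-- `D_h^{(2p^i)}`. -/
def D2P (p g h i : ℕ) : Finset ℕ := GC h g 1 (2 * p ^ i) (p ^ (i - 1) * (p - 1) / 2) 1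

/-- `D_h^{(q^j)}`. -/
def DQ (q g h j : ℕ) : Finset ℕ := GC h g 1 (q ^ j) (q ^ (j - 1) * (q - 1) / 2) 1

/-- `D_h^{(2q^j)}`. -/
def D2Q (q g h j : ℕ) : Finset ℕ := GC h g 1 (2 * q ^ j) (q ^ (j - 1) * (q - 1) / 2) 1

/-- `c · A`. -/
def scaled (c : ℕ) (A : Finset ℕ) : Finset ℕ := A.image (fun x => c * x)

/-- `H_h^{(p^i q^j)} = p^{m-i} q^{n-j} D_h^{(p^i q^j)}`. -/
def HPQ (p q m n g y h i j : ℕ) : Finset ℕ :=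
  scaled (p ^ (m - i) * q ^ (n - j)) (DPQ p q g y h i j)

/-- `H_h^{(2 p^i q^j)} = p^{m-i} q^{n-j} D_h^{(2 p^i q^j)}`. -/
def H2PQ (p q m n g y h i j : ℕ) : Finset ℕ :=
  scaled (p ^ (m - i) * q ^ (n - j)) (D2PQ p q g y h i j)

/-- `H_h^{(p^i)} = p^{m-i} q^n D_h^{(p^i)}`. -/
def HP (p q m n g h i : ℕ) : Finset ℕ := scaled (p ^ (m - i) * q ^ n) (DP p g h i)

/-- `H_h^{(2p^i)} = p^{m-i} q^n D_h^{(2p^i)}`. -/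
def H2P (p q m n g h i : ℕ) : Finset ℕ := scaled (p ^ (m - i) * q ^ n) (D2P p g h i)

/-- `H_h^{(q^j)} = p^m q^{n-j} D_h^{(q^j)}`. -/
def HQ (p q m n g h j : ℕ) : Finset ℕ := scaled (p ^ m * q ^ (n - j)) (DQ q g h j)

/-- `H_h^{(2q^j)} = p^m q^{n-j} D_h^{(2q^j)}`. -/
def H2Q (p q m n g h j : ℕ) : Finset ℕ := scaled (p ^ m * q ^ (n - j)) (D2Q q g h j)

/-- `⋃_{i,j} H_h^{(2p^i q^j)} ∪ ⋃_i H_h^{(2p^i)} ∪ ⋃_j H_h^{(2q^j)}`. -/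
def UnionH (p q m n g y h : ℕ) : Finset ℕ :=
  ((Finset.Icc 1 m).biUnion fun i => (Finset.Icc 1 n).biUnion fun j => H2PQ p q m n g y h i j)
    ∪ ((Finset.Icc 1 m).biUnion fun i => H2P p q m n g h i)
    ∪ ((Finset.Icc 1 n).biUnion fun j => H2Q p q m n g h j)

/-- `⋃_{i,j} 2H_h^{(p^i q^j)} ∪ ⋃_i 2H_h^{(p^i)} ∪ ⋃_j 2H_h^{(q^j)}`. -/
def Union2H (p q m n g y h : ℕ) : Finset ℕ :=
  ((Finset.Icc 1 m).biUnion fun i =>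
      (Finset.Icc 1 n).biUnion fun j => scaled 2 (HPQ p q m n g y h i j))
    ∪ ((Finset.Icc 1 m).biUnion fun i => scaled 2 (HP p q m n g h i))
    ∪ ((Finset.Icc 1 n).biUnion fun j => scaled 2 (HQ p q m n g h j))

/-- The quaternary generalized cyclotomic sequence of period `2 p^m q^n`. -/
def seqS (p q m n g y : ℕ) (a b c d e : F4) (u : ℕ) : F4 :=
  let v := u % (2 * (p ^ m * q ^ n))
  if v = 0 then 0
  else if v = p ^ m * q ^ n then e
  else if v ∈ UnionH p q m n g y 0 then a
  else if v ∈ UnionH p q m n g y 1 then b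
  else if v ∈ Union2H p q m n g y 0 then c
  else if v ∈ Union2H p q m n g y 1 then d
  else 0

/-- The generating polynomial `S(x) = ∑_{u=0}^{2p^m q^n - 1} s_u x^u ∈ F₄[x]`. -/
def genPoly (p q m n g y : ℕ) (a b c d e : F4) : Polynomial F4 :=
  ∑ u ∈ Finset.range (2 * (p ^ m * q ^ n)),
    Polynomial.C (seqS p q m n g y a b c d e u) * Polynomial.X ^ u

/-- The linear complexity of a sequence over a field: the least `L > 0` admitting a linear
recurrence `s_{u+L} = c_1 s_{u+L-1} + ⋯ + c_L s_u`. -/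
def LinearComplexity {F : Type*} [Field F] (s : ℕ → F) : ℕ :=
  sInf {L | 0 < L ∧ ∃ c : Fin L → F,
    ∀ u, s (u + L) = ∑ i : Fin L, c i * s (u + L - 1 - (i : ℕ))}

/-! After unfolding `H_1^{(2p^i)}`, `S_1^{(i,0)}(β^k) = ∑_{t < p^{i-1}(p-1)/2} ε^{g^{2t}}` with
`ε = β^{k p^{m-i} q^n g}`, a primitive `p^{i-a}`-th root of unity (so `ε = 1` when `i ≤ a`).
Write `i = a + s` with `s ≥ 1`. As `g²` has order `p^{s-1}(p-1)/2` modulo `p^s`, the sum is `p^a`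
copies of `∑ ε^x` over the squares `x` modulo `p^s`, i.e. one copy in characteristic `2`; for
`s = 1` this is the period in the statement. For `s ≥ 2` put `r = p^{s-2}(p-1)/2` and
`g^{2r} = 1 + d`: then `p^{s-1} ∣ d` but `p^s ∤ d`, so `d² ≡ 0` and
`g^{2(vr+u)} ≡ g^{2u}(1 + vd)` modulo `p^s`. Hence the squares split into cosets of
`{1 + vd : v < p}`, on each of which the terms form a geometric progression whose ratio is a
nontrivial `p`-th root of unity. -/

theorem Nat.one_add_pow_modEq {M d : ℕ} (hd : M ∣ d * d) (v : ℕ) :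
    (1 + d) ^ v ≡ 1 + v * d [MOD M] := by
  induction v with
  | zero => simp [Nat.ModEq.refl]
  | succ v ih =>
    calc (1 + d) ^ (v + 1) = (1 + d) ^ v * (1 + d) := pow_succ _ _
      _ ≡ (1 + v * d) * (1 + d) [MOD M] := ih.mul_right _
      _ = 1 + (v + 1) * d + v * (d * d) := by ring
      _ ≡ 1 + (v + 1) * d + v * 0 [MOD M] :=
          ((Nat.modEq_zero_iff_dvd.2 hd).mul_left v).add_left _
      _ = 1 + (v + 1) * d := by ring

theorem Finset.sum_range_mul_eq_sum_sum {M : Type*} [AddCommMonoid M] (f : ℕ → M) (N r : ℕ) :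
    ∑ t ∈ range (N * r), f t = ∑ v ∈ range N, ∑ u ∈ range r, f (v * r + u) := by
  induction N with
  | zero => simp
  | succ N ih => rw [Nat.succ_mul, sum_range_add, ih, sum_range_succ]

theorem Function.Periodic.sum_range_mul {M : Type*} [AddCommMonoid M] {f : ℕ → M} {r : ℕ}
    (hf : Function.Periodic f r) (Q : ℕ) :
    ∑ t ∈ range (Q * r), f t = Q • ∑ t ∈ range r, f t := by
  have hvu (v u : ℕ) : f (u + v * r) = f u := hf.nat_mul v u
  simp_rw [sum_range_mul_eq_sum_sum, add_comm _ (_ : ℕ), hvu, sum_const, card_range]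

theorem sum_range_pow_pow_mul {R : Type*} [Semiring R] {x : R} {M h r : ℕ} (hx : x ^ M = 1)
    (hr : h ^ r ≡ 1 [MOD M]) (Q : ℕ) :
    ∑ t ∈ range (Q * r), x ^ h ^ t = Q • ∑ t ∈ range r, x ^ h ^ t := by
  have hper : Function.Periodic (fun t => x ^ h ^ t) r := fun t =>
    pow_eq_pow_of_modEq (by simpa [pow_add] using hr.mul_left (h ^ t)) hx
  exact hper.sum_range_mul Q

theorem IsPrimitiveRoot.sum_range_pow_pow_eq_zero {R : Type*} [CommRing R] [IsDomain R]
    {ζ : R} {M h r d N : ℕ} (hζ : IsPrimitiveRoot ζ M) (hh : h.Coprime M)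
    (hr : h ^ r = 1 + d) (hdd : M ∣ d * d) (hdN : M ∣ d * N) (hd : ¬ M ∣ d) :
    ∑ t ∈ range (N * r), ζ ^ h ^ t = 0 := by
  rw [sum_range_mul_eq_sum_sum, sum_comm]
  refine sum_eq_zero fun u _ => ?_
  set ω := ζ ^ (h ^ u * d)
  have hterm (v : ℕ) : ζ ^ h ^ (v * r + u) = ζ ^ h ^ u * ω ^ v := by
    rw [← pow_mul, ← pow_add]
    refine pow_eq_pow_of_modEq ?_ hζ.pow_eq_one
    calc h ^ (v * r + u) = h ^ u * (1 + d) ^ v := by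
          rw [pow_add, mul_comm v, pow_mul, hr, mul_comm]
      _ ≡ h ^ u * (1 + v * d) [MOD M] := (Nat.one_add_pow_modEq hdd v).mul_left _
      _ = h ^ u + h ^ u * d * v := by ring
  have hωN : ω ^ N = 1 := by
    rw [← pow_mul, hζ.pow_eq_one_iff_dvd, mul_assoc]
    exact hdN.mul_left _
  have hω : ω ≠ 1 := by
    rwa [Ne, hζ.pow_eq_one_iff_dvd, (hh.pow_left u).symm.dvd_mul_left]
  have hgeom := geom_sum_mul ω N
  rw [hωN, sub_self] at hgeom
  simp_rw [hterm, ← mul_sum, (mul_eq_zero.1 hgeom).resolve_right (sub_ne_zero.2 hω), mul_zero]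

theorem IsPrimitiveRoot.pow_primePow_mul_coprime {M : Type*} [CommMonoid M] {β : M}
    {p m Q a k : ℕ} (hβ : IsPrimitiveRoot β (p ^ m * Q)) (hp : p ≠ 0) (hQ : Q ≠ 0)
    (hk : k.Coprime p) : IsPrimitiveRoot (β ^ (p ^ a * Q * k)) (p ^ (m - a)) := by
  rcases le_or_gt a m with ham | hma
  · have hsplit : p ^ m * Q = p ^ (m - a) * (p ^ a * Q) := by
      rw [← mul_assoc, ← pow_add, Nat.sub_add_cancel ham]
    have hroot := hβ.pow_of_dvd (by positivity) (Dvd.intro_left _ hsplit.symm)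
    rw [hsplit, Nat.mul_div_cancel _ (by positivity)] at hroot
    rw [pow_mul]
    exact hroot.pow_of_coprime k (hk.pow_right _)
  · rw [Nat.sub_eq_zero_of_le hma.le, pow_zero, IsPrimitiveRoot.one_right_iff,
      hβ.pow_eq_one_iff_dvd]
    exact (mul_dvd_mul_right (pow_dvd_pow p hma.le) Q).mul_right k

theorem natCast_eq_one_of_odd {R : Type*} [Semiring R] (h2 : (2 : R) = 0) {n : ℕ}
    (hn : Odd n) : (n : R) = 1 := by
  obtain ⟨k, rfl⟩ := hn
  push_cast
  rw [h2, zero_mul, zero_add]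

theorem two_eq_zero_of_card_eq_four_pow {K : Type*} [Field K] [Fintype K] {k : ℕ}
    (hK : Fintype.card K = 4 ^ k) : (2 : K) = 0 := by
  have hcard := FiniteField.cast_card_eq_zero K
  have hk : k ≠ 0 := by
    rintro rfl
    exact (Fintype.one_lt_card (α := K)).ne' hK
  rw [hK, Nat.cast_pow, pow_eq_zero_iff hk, Nat.cast_ofNat] at hcard
  exact mul_self_eq_zero.1 (by rw [← hcard]; norm_num)

theorem sum_pow_scaled {R : Type*} [Semiring R] (x : R) {c : ℕ} (hc : c ≠ 0) (S : Finset ℕ) :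
    ∑ t ∈ scaled c S, x ^ t = ∑ t ∈ S, (x ^ c) ^ t := by
  rw [scaled, sum_image fun a _ b _ h => Nat.eq_of_mul_eq_mul_left (Nat.pos_of_ne_zero hc) h]
  simp_rw [pow_mul]

theorem GC_one_eq_image (g M D : ℕ) :
    GC 1 g 1 M D 1 = (range D).image fun t => g ^ (2 * t + 1) % M := by
  ext a
  simp [GC, GC1, GC0, pow_succ, mul_comm g]

theorem sum_pow_GC_one {R : Type*} [Semiring R] {x : R} {g M D : ℕ} (hx : x ^ M = 1)
    (hg : orderOf (g : ZMod M) = 2 * D) :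
    ∑ t ∈ GC 1 g 1 M D 1, x ^ t = ∑ t ∈ range D, (x ^ g) ^ (g ^ 2) ^ t := by
  rw [GC_one_eq_image, sum_image]
  · refine sum_congr rfl fun t _ => ?_
    rw [pow_eq_pow_of_modEq (Nat.mod_modEq _ _) hx, ← pow_mul, ← pow_mul, pow_succ, mul_comm]
  · intro t ht t' ht' h
    have hcast : (g : ZMod M) ^ (2 * t + 1) = (g : ZMod M) ^ (2 * t' + 1) := by
      exact_mod_cast (ZMod.natCast_eq_natCast_iff' _ _ _).2 h
    have hlt {t} (ht : t ∈ (range D : Set ℕ)) :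
        2 * t + 1 ∈ Set.Iio (orderOf (g : ZMod M)) := by
      rw [Set.mem_Iio, hg]
      have := mem_range.1 ht
      omega
    have := pow_injOn_Iio_orderOf (hlt ht) (hlt ht') hcast
    omega

section PrimePower

variable {p : ℕ}

theorem coprime_of_orderOf_eq_totient {g s : ℕ} (hp : p.Prime) (hs : s ≠ 0)
    (hg : orderOf (g : ZMod (p ^ s)) = Nat.totient (p ^ s)) : g.Coprime p := by
  have hne : orderOf (g : ZMod (p ^ s)) ≠ 0 :=
    hg ▸ (Nat.totient_pos.2 (by positivity [hp.pos])).ne'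
  exact ((ZMod.isUnit_iff_coprime g _).1 (orderOf_pos_iff.1 (Nat.pos_of_ne_zero hne)).isUnit)
    |>.coprime_dvd_right (dvd_pow_self p hs)

theorem two_mul_pow_mul_sub_one_div_two (hpodd : Odd p) (k : ℕ) :
    2 * (p ^ k * (p - 1) / 2) = p ^ k * (p - 1) :=
  Nat.mul_div_cancel' (dvd_mul_of_dvd_right (Nat.Odd.sub_odd hpodd odd_one).two_dvd _)

theorem pow_add_mul_sub_one_div_two (hpodd : Odd p) (a k : ℕ) :
    p ^ (a + k) * (p - 1) / 2 = p ^ a * (p ^ k * (p - 1) / 2) := by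
  rw [pow_add, mul_assoc, Nat.mul_div_assoc _ (dvd_mul_of_dvd_right
    (Nat.Odd.sub_odd hpodd odd_one).two_dvd _)]

theorem sum_pow_H2P_one {R : Type*} [Semiring R] {x : R} {q m n g i : ℕ}
    (hp : p.Prime) (hpodd : Odd p) (hq : q ≠ 0) (hi : 1 ≤ i) (him : i ≤ m)
    (hx : x ^ (p ^ m * q ^ n) = 1)
    (hg : orderOf (g : ZMod (2 * p ^ i)) = Nat.totient (2 * p ^ i)) :
    ∑ t ∈ H2P p q m n g 1 i, x ^ t
      = ∑ t ∈ range (p ^ (i - 1) * (p - 1) / 2),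
          (x ^ (p ^ (m - i) * q ^ n * g)) ^ (g ^ 2) ^ t := by
  have hx' : (x ^ (p ^ (m - i) * q ^ n)) ^ (2 * p ^ i) = 1 := by
    rw [← pow_mul, show p ^ (m - i) * q ^ n * (2 * p ^ i) = p ^ m * q ^ n * 2 by
      rw [← Nat.sub_add_cancel him, pow_add, Nat.add_sub_cancel]; ring, pow_mul, hx, one_pow]
  have hg' : orderOf (g : ZMod (2 * p ^ i)) = 2 * (p ^ (i - 1) * (p - 1) / 2) := by
    rw [hg, Nat.totient_mul ((Nat.coprime_two_left.2 hpodd).pow_right i), Nat.totient_two,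
      one_mul, Nat.totient_prime_pow hp hi, two_mul_pow_mul_sub_one_div_two hpodd]
  rw [H2P, sum_pow_scaled _ (by positivity [hp.ne_zero]), D2P, sum_pow_GC_one hx' hg',
    pow_mul x (p ^ (m - i) * q ^ n) g]

theorem sum_pow_DP_one_one {R : Type*} [Semiring R] {x : R} {g : ℕ} (hp : p.Prime)
    (hpodd : Odd p) (hx : x ^ p = 1)
    (hg : orderOf (g : ZMod (p ^ 1)) = Nat.totient (p ^ 1)) :
    ∑ t ∈ DP p g 1 1, x ^ t
      = ∑ t ∈ range (p ^ (1 - 1) * (p - 1) / 2), (x ^ g) ^ (g ^ 2) ^ t := by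
  rw [Nat.totient_prime_pow hp Nat.one_pos, ← two_mul_pow_mul_sub_one_div_two hpodd] at hg
  exact sum_pow_GC_one (by rwa [pow_one]) hg

theorem sum_range_pow_sq_pow_eq_of_two_eq_zero {R : Type*} [Semiring R] (h2 : (2 : R) = 0)
    {ε : R} {s g : ℕ} (hp : p.Prime) (hpodd : Odd p) (hs : 1 ≤ s) (hε : ε ^ p ^ s = 1)
    (hg : g.Coprime p) (a : ℕ) :
    ∑ t ∈ range (p ^ (a + s - 1) * (p - 1) / 2), ε ^ (g ^ 2) ^ t
      = ∑ t ∈ range (p ^ (s - 1) * (p - 1) / 2), ε ^ (g ^ 2) ^ t := by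
  have hr : (g ^ 2) ^ (p ^ (s - 1) * (p - 1) / 2) ≡ 1 [MOD p ^ s] := by
    rw [← pow_mul, two_mul_pow_mul_sub_one_div_two hpodd, ← Nat.totient_prime_pow hp hs]
    exact Nat.ModEq.pow_totient (hg.pow_right s)
  rw [Nat.add_sub_assoc hs, pow_add_mul_sub_one_div_two hpodd, sum_range_pow_pow_mul hε hr,
    nsmul_eq_mul, natCast_eq_one_of_odd h2 hpodd.pow, one_mul]

theorem IsPrimitiveRoot.sum_range_pow_sq_pow_eq_zero {R : Type*} [CommRing R] [IsDomain R]
    {ζ : R} {s g : ℕ} (hp : p.Prime) (hpodd : Odd p) (hs : 2 ≤ s)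
    (hζ : IsPrimitiveRoot ζ (p ^ s)) (hg : orderOf (g : ZMod (p ^ s)) = Nat.totient (p ^ s)) :
    ∑ t ∈ range (p ^ (s - 1) * (p - 1) / 2), ζ ^ (g ^ 2) ^ t = 0 := by
  set r := p ^ (s - 2) * (p - 1) / 2
  have hgp : g.Coprime p := coprime_of_orderOf_eq_totient hp (by omega) hg
  have h2r : 2 * r = Nat.totient (p ^ (s - 1)) := by
    rw [two_mul_pow_mul_sub_one_div_two hpodd, Nat.totient_prime_pow hp (by omega),
      show s - 1 - 1 = s - 2 by omega]
  have htot : Nat.totient (p ^ s) = p * (2 * r) := by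
    rw [h2r, ← Nat.totient_mul_of_prime_of_dvd hp (dvd_pow_self p (by omega)), ← pow_succ',
      Nat.sub_add_cancel (by omega)]
  have hr1 : (g ^ 2) ^ r ≡ 1 [MOD p ^ (s - 1)] := by
    rw [← pow_mul, h2r]
    exact Nat.ModEq.pow_totient (hgp.pow_right _)
  have hr : ¬ (g ^ 2) ^ r ≡ 1 [MOD p ^ s] := by
    intro h
    have hdvd : orderOf (g : ZMod (p ^ s)) ∣ 2 * r := by
      refine orderOf_dvd_of_pow_eq_one ?_
      have := (ZMod.natCast_eq_natCast_iff _ _ _).2 h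
      push_cast at this
      rwa [← pow_mul] at this
    rw [hg, htot] at hdvd
    have hpos : 0 < 2 * r := h2r ▸ Nat.totient_pos.2 (by positivity [hp.pos])
    nlinarith [Nat.le_of_dvd hpos hdvd, hp.two_le]
  have hg0 : g ≠ 0 := by
    rintro rfl
    exact hp.one_lt.ne' (Nat.coprime_zero_left _ |>.1 hgp)
  have hle : 1 ≤ (g ^ 2) ^ r := Nat.one_le_iff_ne_zero.2 (by positivity)
  obtain ⟨d, hd⟩ : ∃ d, (g ^ 2) ^ r = 1 + d := ⟨_, (Nat.add_sub_cancel' hle).symm⟩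
  have hdvd : p ^ (s - 1) ∣ d := by
    simpa [hd] using (Nat.modEq_iff_dvd' hle).1 hr1.symm
  rw [show s - 1 = 1 + (s - 2) by omega, pow_add_mul_sub_one_div_two hpodd, pow_one]
  refine hζ.sum_range_pow_pow_eq_zero (hgp.pow 2 s) hd ?_ ?_ ?_
  · refine (pow_dvd_pow p (by omega : s ≤ (s - 1) + (s - 1))).trans ?_
    rw [pow_add]
    exact mul_dvd_mul hdvd hdvd
  · rw [← pow_sub_one_mul (by omega : s ≠ 0)]
    exact mul_dvd_mul_right hdvd p
  · exact fun hd' => hr ((Nat.modEq_iff_dvd' hle).2 (by simpa [hd] using hd')).symm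

end PrimePower

theorem statement7_general
    (p q m n g : ℕ)
    (hp : p.Prime) (hq : q.Prime) (hpq : p ≠ q) (hpodd : Odd p)
    (hgp : ∀ i, 1 ≤ i → i ≤ m → orderOf (g : ZMod (p ^ i)) = Nat.totient (p ^ i))
    (hg2p : ∀ i, 1 ≤ i → i ≤ m → orderOf (g : ZMod (2 * p ^ i)) = Nat.totient (2 * p ^ i))
    (K : Type*) [Field K] [Fintype K]
    (hK : Fintype.card K = 4 ^ orderOf (4 : ZMod (p ^ m * q ^ n)))
    (β : K) (hβ : IsPrimitiveRoot β (p ^ m * q ^ n))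
    (A B l : ℕ) (hl : Nat.gcd l (p * q) = 1)
    : ∀ i, 1 ≤ i → i ≤ m →
      ((i ≤ A →
          ∑ t ∈ H2P p q m n g 1 i, (β ^ (p ^ A * q ^ B * l)) ^ t
            = ((p ^ (i - 1) * (p - 1) / 2 : ℕ) : K)) ∧
        (i = A + 1 →
          ∑ t ∈ H2P p q m n g 1 i, (β ^ (p ^ A * q ^ B * l)) ^ t
            = ∑ t ∈ DP p g 1 1, (β ^ (p ^ (m - 1) * q ^ (n + B))) ^ (l * t)) ∧
        (A + 1 < i →
          ∑ t ∈ H2P p q m n g 1 i, (β ^ (p ^ A * q ^ B * l)) ^ t = 0)) := by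
  intro i hi him
  have hgp1 : g.Coprime p := coprime_of_orderOf_eq_totient hp (by omega) (hgp i hi him)
  have hx : (β ^ (p ^ A * q ^ B * l)) ^ (p ^ m * q ^ n) = 1 := by
    rw [← pow_mul, mul_comm, pow_mul, hβ.pow_eq_one, one_pow]
  have hk : (q ^ B * l * g).Coprime p := (((Nat.coprime_primes hq hp).2 hpq.symm).pow_left B
    |>.mul_left (Nat.Coprime.coprime_mul_right_right hl)).mul_left hgp1
  have hε : IsPrimitiveRoot (β ^ (p ^ A * q ^ B * l * (p ^ (m - i) * q ^ n * g)))
      (p ^ (i - A)) := by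
    rw [show p ^ A * q ^ B * l * (p ^ (m - i) * q ^ n * g)
        = p ^ (A + (m - i)) * q ^ n * (q ^ B * l * g) by rw [pow_add]; ring,
      show i - A = m - (A + (m - i)) by omega]
    exact hβ.pow_primePow_mul_coprime hp.ne_zero (pow_ne_zero _ hq.ne_zero) hk
  rw [sum_pow_H2P_one hp hpodd hq.ne_zero hi him hx (hg2p i hi him), ← pow_mul]
  rcases le_or_gt i A with hiA | hAi
  · rw [Nat.sub_eq_zero_of_le hiA, pow_zero, IsPrimitiveRoot.one_right_iff] at hε
    refine ⟨fun _ => ?_, fun h => absurd h (by omega), fun h => absurd h (by omega)⟩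
    simp [hε]
  obtain ⟨s, hs, rfl⟩ : ∃ s, 1 ≤ s ∧ i = A + s := ⟨i - A, by omega, by omega⟩
  rw [Nat.add_sub_cancel_left] at hε
  rw [sum_range_pow_sq_pow_eq_of_two_eq_zero (two_eq_zero_of_card_eq_four_pow hK) hp hpodd hs
    hε.pow_eq_one hgp1 A]
  refine ⟨fun h => absurd h (by omega), fun h => ?_, fun h => ?_⟩
  · obtain rfl : s = 1 := by omega
    have hζ : (β ^ (p ^ (m - 1) * q ^ (n + B))) ^ p = 1 := by
      rw [← pow_mul, hβ.pow_eq_one_iff_dvd]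
      exact Dvd.intro (q ^ B) (by rw [pow_add, ← pow_sub_one_mul (by omega : m ≠ 0)]; ring)
    have hbase : β ^ (p ^ A * q ^ B * l * (p ^ (m - (A + 1)) * q ^ n * g))
        = ((β ^ (p ^ (m - 1) * q ^ (n + B))) ^ l) ^ g := by
      rw [← pow_mul, ← pow_mul, show m - 1 = A + (m - (A + 1)) by omega, pow_add, pow_add]
      congr 1
      ring
    simp_rw [pow_mul _ l]
    rw [sum_pow_DP_one_one hp hpodd (by rw [pow_right_comm, hζ, one_pow])
      (hgp 1 le_rfl (by omega)), hbase]
  · exact hε.sum_range_pow_sq_pow_eq_zero hp hpodd (by omega) (hgp s (by omega) (by omega))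

theorem statement7
    (p q m n g y : ℕ)
    (hp : p.Prime) (hq : q.Prime) (hpq : p ≠ q) (hpodd : Odd p) (hqodd : Odd q)
    (hm : 1 ≤ m) (hn : 1 ≤ n) (hgodd : Odd g)
    (hgp : ∀ i, 1 ≤ i → i ≤ m → orderOf (g : ZMod (p ^ i)) = Nat.totient (p ^ i))
    (hg2p : ∀ i, 1 ≤ i → i ≤ m → orderOf (g : ZMod (2 * p ^ i)) = Nat.totient (2 * p ^ i))
    (hgq : ∀ j, 1 ≤ j → j ≤ n → orderOf (g : ZMod (q ^ j)) = Nat.totient (q ^ j))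
    (hg2q : ∀ j, 1 ≤ j → j ≤ n → orderOf (g : ZMod (2 * q ^ j)) = Nat.totient (2 * q ^ j))
    (hylt : y < 2 * (p ^ m * q ^ n))
    (hyg : y ≡ g [MOD 2 * p ^ m]) (hy1 : y ≡ 1 [MOD 2 * q ^ n])
    (K : Type*) [Field K] [Fintype K]
    (hK : Fintype.card K = 4 ^ orderOf (4 : ZMod (p ^ m * q ^ n)))
    (β : K) (hβ : IsPrimitiveRoot β (p ^ m * q ^ n))
    (A B l : ℕ) (hA : A ≤ m - 1) (hB : B ≤ n - 1) (hl : Nat.gcd l (p * q) = 1)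
    : ∀ i, 1 ≤ i → i ≤ m →
      ((i ≤ A →
          ∑ t ∈ H2P p q m n g 1 i, (β ^ (p ^ A * q ^ B * l)) ^ t
            = ((p ^ (i - 1) * (p - 1) / 2 : ℕ) : K)) ∧
        (i = A + 1 →
          ∑ t ∈ H2P p q m n g 1 i, (β ^ (p ^ A * q ^ B * l)) ^ t
            = ∑ t ∈ DP p g 1 1, (β ^ (p ^ (m - 1) * q ^ (n + B))) ^ (l * t)) ∧
        (A + 1 < i →
          ∑ t ∈ H2P p q m n g 1 i, (β ^ (p ^ A * q ^ B * l)) ^ t = 0)) :=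
  statement7_general p q m n g hp hq hpq hpodd hgp hg2p K hK β hβ A B l hl

end
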